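/- arXiv:0902.0235 — 4 statements merged into one kernel-verified Lean document; each statement's English description precedes it below -/
import Mathlib

section
/- The function r ↦ 2(1+r)²(π − arccos(1/(1+r))) + 2(2r+r²)^{1/2} has the asymptotic expansion 2π + 4πr − (8√2/3)r^{3/2} + O(r²) as r → 0⁺. -/
/-!
Put `s = √(2r + r²)`, so that `(1 + r)² = 1 + s²` and `arccos (1 / (1 + r)) = arctan s`. The area
becomes `2 (1 + s²) (π - arctan s) + 2 s`, and the bounds
`s - s³/3 ≤ arctan s ≤ s - s³/3 + s⁵/5` (the remainders have derivatives `s⁴/(1+s²)` and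
`s⁶/(1+s²)`) turn it into `2π + 2πs² - (4/3) s³ + O(s⁵)`. Finally `2πs² = 4πr + 2πr²`,
`s⁵ = O(r²)` and `s³ = (2r)^{3/2} + O(r²)`.
-/

open Real Filter Asymptotics

namespace Real

theorem sub_pow_three_div_three_le_arctan {x : ℝ} (hx : 0 ≤ x) : x - x ^ 3 / 3 ≤ arctan x := by
  have hmono : Monotone fun y : ℝ => arctan y - (y - y ^ 3 / 3) := by
    refine monotone_of_hasDerivAt_nonneg (f' := fun y => y ^ 4 / (1 + y ^ 2))
      (fun y => ?_) fun y => by positivity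
    refine ((hasDerivAt_arctan y).sub ((hasDerivAt_id y).sub
      ((hasDerivAt_pow 3 y).div_const 3))).congr_deriv ?_
    field_simp
    ring
  simpa using hmono hx

theorem arctan_le_sub_pow_three_div_three_add {x : ℝ} (hx : 0 ≤ x) :
    arctan x ≤ x - x ^ 3 / 3 + x ^ 5 / 5 := by
  have hmono : Monotone fun y : ℝ => y - y ^ 3 / 3 + y ^ 5 / 5 - arctan y := by
    refine monotone_of_hasDerivAt_nonneg (f' := fun y => y ^ 6 / (1 + y ^ 2))
      (fun y => ?_) fun y => by positivity
    refine ((((hasDerivAt_id y).sub ((hasDerivAt_pow 3 y).div_const 3)).add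
      ((hasDerivAt_pow 5 y).div_const 5)).sub (hasDerivAt_arctan y)).congr_deriv ?_
    field_simp
    ring
  simpa using hmono hx

theorem arccos_one_div_one_add {r : ℝ} (hr : 0 ≤ r) :
    arccos (1 / (1 + r)) = arctan √(2 * r + r ^ 2) := by
  have h1r : 0 < 1 + r := by linarith
  rw [arccos_eq_arctan (by positivity),
    show 1 - (1 / (1 + r)) ^ 2 = (2 * r + r ^ 2) / (1 + r) ^ 2 by field_simp; ring,
    sqrt_div' _ (by positivity), sqrt_sq h1r.le]
  field_simp

theorem sqrt_add_pow_three_sub_le {a b : ℝ} (ha : 0 ≤ a) (hb : 0 ≤ b) :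
    √(a + b) ^ 3 - √a ^ 3 ≤ a * √b + b * √(a + b) := by
  have hs : √(a + b) ^ 2 = a + b := sq_sqrt (by positivity)
  have hw : √a ^ 2 = a := sq_sqrt ha
  have ht : √b ^ 2 = b := sq_sqrt hb
  have hswt : √(a + b) ≤ √a + √b :=
    sqrt_le_iff.2 ⟨by positivity, by nlinarith [mul_nonneg (sqrt_nonneg a) (sqrt_nonneg b)]⟩
  have hdecomp : √(a + b) ^ 3 - √a ^ 3 = a * (√(a + b) - √a) + b * √(a + b) := by
    linear_combination √(a + b) * hs - √a * hw
  rw [hdecomp]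
  gcongr
  linarith

theorem sqrt_two_mul_pow_three {r : ℝ} (hr : 0 ≤ r) :
    √(2 * r) ^ 3 = 2 * √2 * r ^ (3 / 2 : ℝ) := by
  rw [sqrt_mul zero_le_two, mul_pow, show (3 / 2 : ℝ) = 1 + 1 / 2 by norm_num,
    rpow_add' hr (by norm_num), rpow_one, ← sqrt_eq_rpow]
  have h2 : √2 ^ 2 = 2 := sq_sqrt zero_le_two
  have hr' : √r ^ 2 = r := sq_sqrt hr
  linear_combination (√2 * √r ^ 3) * h2 + (2 * √2 * √r) * hr'

end Real

/-- The area of the tube of radius `r`, in terms of `s = tan θ = √((1 + r)² - 1)`, where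
`θ = arccos (1 / (1 + r))`. -/
noncomputable def tubeArea (s : ℝ) : ℝ := 2 * (1 + s ^ 2) * (π - arctan s) + 2 * s

theorem tubeArea_sqrt {r : ℝ} (hr : 0 ≤ r) :
    tubeArea √(2 * r + r ^ 2) =
      2 * (1 + r) ^ 2 * (π - arccos (1 / (1 + r))) + 2 * √(2 * r + r ^ 2) := by
  rw [tubeArea, arccos_one_div_one_add hr, sq_sqrt (by positivity)]
  ring

theorem abs_tubeArea_sub_le {s : ℝ} (hs : 0 ≤ s) :
    |tubeArea s - (2 * π + 2 * π * s ^ 2 - 4 / 3 * s ^ 3)| ≤ (1 + s ^ 2) * s ^ 5 := by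
  have hlow := sub_pow_three_div_three_le_arctan hs
  have hup := arctan_le_sub_pow_three_div_three_add hs
  have hs2 : 0 ≤ 1 + s ^ 2 := by positivity
  have hs5 : 0 ≤ s ^ 5 := by positivity
  rw [tubeArea, abs_le]
  constructor <;>
    nlinarith [mul_le_mul_of_nonneg_left hlow hs2, mul_le_mul_of_nonneg_left hup hs2]

theorem abs_tubeArea_sqrt_sub_le {r : ℝ} (hr0 : 0 ≤ r) (hr1 : r ≤ 1) :
    |tubeArea √(2 * r + r ^ 2) - (2 * π + 4 * π * r - 4 / 3 * √(2 * r) ^ 3)| ≤ 86 * r ^ 2 := by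
  have hcube := sqrt_add_pow_three_sub_le (by positivity : 0 ≤ 2 * r) (sq_nonneg r)
  rw [sqrt_sq hr0] at hcube
  have htaylor := abs_tubeArea_sub_le (sqrt_nonneg (2 * r + r ^ 2))
  set s := √(2 * r + r ^ 2)
  have hs2 : s ^ 2 = 2 * r + r ^ 2 := sq_sqrt (by positivity)
  have hcube0 : √(2 * r) ^ 3 ≤ s ^ 3 := by
    gcongr
    exact sqrt_le_sqrt (by linarith [sq_nonneg r])
  have hdecomp : tubeArea s - (2 * π + 4 * π * r - 4 / 3 * √(2 * r) ^ 3) =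
      (tubeArea s - (2 * π + 2 * π * s ^ 2 - 4 / 3 * s ^ 3)) + 2 * π * r ^ 2
        - 4 / 3 * (s ^ 3 - √(2 * r) ^ 3) := by
    linear_combination 2 * π * hs2
  have hs2_le : s ^ 2 ≤ 3 * r := by nlinarith
  have hs_le : s ≤ 2 := by nlinarith
  have hs5 : (1 + s ^ 2) * s ^ 5 ≤ 72 * r ^ 2 :=
    calc (1 + s ^ 2) * s ^ 5 = (1 + s ^ 2) * (s ^ 2) ^ 2 * s := by ring
      _ ≤ (1 + 3) * (3 * r) ^ 2 * 2 := by gcongr; linarith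
      _ = 72 * r ^ 2 := by ring
  have hpi0 : 0 ≤ π * r ^ 2 := by positivity
  have hpi : π * r ^ 2 ≤ 4 * r ^ 2 := by gcongr; exact pi_le_four
  have hrs : r ^ 2 * s ≤ r ^ 2 * 2 := by gcongr
  rw [hdecomp]
  rw [abs_le] at htaylor ⊢
  constructor <;> linarith

theorem tube_area_expansion :
    (fun r : ℝ =>
        (2 * (1 + r) ^ 2 * (π - arccos (1 / (1 + r))) + 2 * Real.sqrt (2 * r + r ^ 2))
          - (2 * π + 4 * π * r - (8 * Real.sqrt 2 / 3) * r ^ ((3 : ℝ) / 2)))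
      =O[nhdsWithin 0 (Set.Ioi 0)] fun r : ℝ => r ^ 2 := by
  refine IsBigO.of_bound 86 ?_
  filter_upwards [Ioc_mem_nhdsGT zero_lt_one] with r ⟨hr0, hr1⟩
  rw [← tubeArea_sqrt hr0.le, show 8 * √2 / 3 * r ^ (3 / 2 : ℝ) = 4 / 3 * √(2 * r) ^ 3 by
    rw [sqrt_two_mul_pow_three hr0.le]; ring, norm_eq_abs, norm_eq_abs,
    abs_of_nonneg (sq_nonneg r)]
  exact abs_tubeArea_sqrt_sub_le hr0.le hr1
end

section
/- Let M and M' be compact convex subsets of ℝ³ with nonempty interiors and with dim(M ∩ M') = 3 (i.e., M ∩ M' has nonempty interior). Then the boundary of M ∪ M' decomposes as the disjoint union of (bd M) \ M', (bd M') \ M, and (bd M ∩ bd M') \ int(M ∪ M'); in particular bd M ∩ bd M' ∩ int(M ∪ M') = ∅. -/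
/-!
For closed `M`, `M'` the decomposition of `bd (M ∪ M')` is point-set topology; the only real
content is that a common boundary point `x` is not interior to `M ∪ M'`. Take `z` in
`int (M ∩ M')` and supporting functionals `f`, `g` of `M`, `M'` at `x` (Hahn–Banach). Both are
strictly larger at `x` than at `z`, so the points `x + t (x - z)`, `t > 0`, lie outside `M ∪ M'`,
yet they tend to `x`.
-/

open Set Filter Topology

section Frontier

variable {X : Type*} [TopologicalSpace X] {A B : Set X}

lemma interior_union_diff_subset_interior (hB : IsClosed B) :
    interior (A ∪ B) \ B ⊆ interior A :=
  interior_maximal (fun _ hx => (interior_subset hx.1).resolve_right hx.2)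
    (isOpen_interior.sdiff hB)

lemma IsClosed.frontier_union (hA : IsClosed A) (hB : IsClosed B) :
    frontier (A ∪ B) =
      (frontier A \ B) ∪ (frontier B \ A) ∪ ((frontier A ∩ frontier B) \ interior (A ∪ B)) := by
  have hAU : interior A ⊆ interior (A ∪ B) := interior_mono subset_union_left
  have hBU : interior B ⊆ interior (A ∪ B) := interior_mono subset_union_right
  have hUA : interior (A ∪ B) \ B ⊆ interior A := interior_union_diff_subset_interior hB
  have hUB : interior (A ∪ B) \ A ⊆ interior B := by
    rw [union_comm]; exact interior_union_diff_subset_interior hA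
  rw [hA.frontier_eq, hB.frontier_eq, (hA.union hB).frontier_eq]
  ext x
  have := @hAU x; have := @hBU x; have := @hUA x; have := @hUB x
  simp only [mem_union, Set.mem_sdiff, mem_inter_iff] at *
  tauto

end Frontier

section Convex

variable {E : Type*} [TopologicalSpace E] [AddCommGroup E] [IsTopologicalAddGroup E]
  [Module ℝ E] [ContinuousSMul ℝ E] {A B : Set E} {x : E}

lemma Convex.exists_supporting_functional (hA : Convex ℝ A) (hAi : (interior A).Nonempty)
    (hx : x ∉ interior A) :
    ∃ f : StrongDual ℝ E, (∀ a ∈ interior A, f a < f x) ∧ ∀ a ∈ A, f a ≤ f x := by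
  obtain ⟨f, hf⟩ := geometric_hahn_banach_open_point hA.interior isOpen_interior hx
  have hcl : closure (interior A) ⊆ f ⁻¹' Iic (f x) :=
    closure_minimal (fun a ha => (hf a ha).le) (isClosed_Iic.preimage f.continuous)
  rw [hA.closure_interior_eq_closure_of_nonempty_interior hAi] at hcl
  exact ⟨f, hf, fun a ha => hcl (subset_closure ha)⟩

lemma Convex.notMem_interior_union (hA : Convex ℝ A) (hB : Convex ℝ B)
    (hAB : (interior (A ∩ B)).Nonempty) (hxA : x ∉ interior A) (hxB : x ∉ interior B) :
    x ∉ interior (A ∪ B) := by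
  obtain ⟨z, hzA, hzB⟩ : (interior A ∩ interior B).Nonempty := by
    rwa [← interior_inter]
  obtain ⟨f, hfi, hf⟩ := hA.exists_supporting_functional ⟨z, hzA⟩ hxA
  obtain ⟨g, hgi, hg⟩ := hB.exists_supporting_functional ⟨z, hzB⟩ hxB
  intro hx
  have hray : Tendsto (fun t : ℝ => x + t • (x - z)) (𝓝[>] 0) (𝓝 x) := by
    have hcont : Continuous fun t : ℝ => x + t • (x - z) := by fun_prop
    simpa using (hcont.tendsto 0).mono_left nhdsWithin_le_nhds
  obtain ⟨t, hmem, ht⟩ :=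
    ((hray.eventually (mem_interior_iff_mem_nhds.1 hx)).and self_mem_nhdsWithin).exists
  rcases hmem with h | h
  · have hle := hf _ h
    have hpos := mul_pos ht (sub_pos.2 (hfi z hzA))
    simp only [map_add, map_smul, map_sub, smul_eq_mul] at hle
    linarith
  · have hle := hg _ h
    have hpos := mul_pos ht (sub_pos.2 (hgi z hzB))
    simp only [map_add, map_smul, map_sub, smul_eq_mul] at hle
    linarith

end Convex

theorem frontier_union_partition_full_dim_general
    (M M' : Set (EuclideanSpace ℝ (Fin 3)))
    (hMc : IsCompact M) (hMv : Convex ℝ M)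
    (hM'c : IsCompact M') (hM'v : Convex ℝ M')
    (hdim : (interior (M ∩ M')).Nonempty) :
    frontier (M ∪ M') =
        (frontier M \ M') ∪ (frontier M' \ M) ∪
          ((frontier M ∩ frontier M') \ interior (M ∪ M')) ∧
      Disjoint (frontier M \ M') (frontier M' \ M) ∧
      Disjoint (frontier M \ M') ((frontier M ∩ frontier M') \ interior (M ∪ M')) ∧
      Disjoint (frontier M' \ M) ((frontier M ∩ frontier M') \ interior (M ∪ M')) ∧
      frontier M ∩ frontier M' ∩ interior (M ∪ M') = ∅ := by
  have hM := hMc.isClosed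
  have hM' := hM'c.isClosed
  refine ⟨hM.frontier_union hM', ?_, ?_, ?_, ?_⟩
  · exact disjoint_left.2 fun _ hx hx' => hx.2 (hM'.frontier_subset hx'.1)
  · exact disjoint_left.2 fun _ hx hx' => hx.2 (hM'.frontier_subset hx'.1.2)
  · exact disjoint_left.2 fun _ hx hx' => hx.2 (hM.frontier_subset hx'.1.1)
  · exact eq_empty_iff_forall_notMem.2 fun _ ⟨⟨hx, hx'⟩, hxU⟩ =>
      hMv.notMem_interior_union hM'v hdim hx.2 hx'.2 hxU

theorem frontier_union_partition_full_dim
    (M M' : Set (EuclideanSpace ℝ (Fin 3)))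
    (hMc : IsCompact M) (hMv : Convex ℝ M) (hMi : (interior M).Nonempty)
    (hM'c : IsCompact M') (hM'v : Convex ℝ M') (hM'i : (interior M').Nonempty)
    (hdim : (interior (M ∩ M')).Nonempty) :
    frontier (M ∪ M') =
        (frontier M \ M') ∪ (frontier M' \ M) ∪
          ((frontier M ∩ frontier M') \ interior (M ∪ M')) ∧
      Disjoint (frontier M \ M') (frontier M' \ M) ∧
      Disjoint (frontier M \ M') ((frontier M ∩ frontier M') \ interior (M ∪ M')) ∧
      Disjoint (frontier M' \ M) ((frontier M ∩ frontier M') \ interior (M ∪ M')) ∧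
      frontier M ∩ frontier M' ∩ interior (M ∪ M') = ∅ :=
  frontier_union_partition_full_dim_general M M' hMc hMv hM'c hM'v hdim
end

section
/- Let M and M' be compact convex subsets of ℝⁿ with nonempty interiors such that M ∩ M' has empty interior. Then M ∩ M' = bd M ∩ bd M', and bd M ∩ int(M ∪ M') = bd M' ∩ int(M ∪ M'). -/
/-!
A convex set with nonempty interior lies in the closure of its interior, so an open set missing
`interior M'` misses `M'`; hence no point of `M ∩ M'` is interior to `M` or to `M'`. A frontier
point of `M` that is interior to `M ∪ M'` is a limit of points of `M' \ M`, hence lies in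
`M ∩ M'`, which is contained in the frontier of `M'`.
-/

open Set

section Frontier

variable {X : Type*} [TopologicalSpace X]

theorem frontier_inter_interior_union_subset_closure (A B : Set X) :
    frontier A ∩ interior (A ∪ B) ⊆ closure B :=
  calc frontier A ∩ interior (A ∪ B)
      ⊆ closure Aᶜ ∩ interior (A ∪ B) := by
        rw [frontier_eq_closure_inter_closure]
        exact inter_subset_inter_left _ inter_subset_right
    _ ⊆ closure (Aᶜ ∩ interior (A ∪ B)) := isOpen_interior.closure_inter
    _ ⊆ closure B := closure_mono fun x ⟨hxA, hxAB⟩ ↦ (interior_subset hxAB).resolve_left hxA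

theorem IsClosed.inter_eq_frontier_inter_frontier {A B : Set X} (hA : IsClosed A)
    (hB : IsClosed B) (hAB : Disjoint (interior A) B) (hBA : Disjoint A (interior B)) :
    A ∩ B = frontier A ∩ frontier B := by
  refine subset_antisymm (fun x ⟨hxA, hxB⟩ ↦ ?_)
    (inter_subset_inter hA.frontier_subset hB.frontier_subset)
  rw [hA.frontier_eq, hB.frontier_eq]
  exact ⟨⟨hxA, hAB.notMem_of_mem_right hxB⟩, ⟨hxB, hBA.notMem_of_mem_left hxA⟩⟩

theorem IsClosed.frontier_inter_interior_union_subset {A B : Set X} (hA : IsClosed A)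
    (hB : IsClosed B) (hAB : A ∩ B = frontier A ∩ frontier B) :
    frontier A ∩ interior (A ∪ B) ⊆ frontier B := fun x hx ↦
  have hxB : x ∈ B := hB.closure_eq ▸ frontier_inter_interior_union_subset_closure A B hx
  (hAB ▸ ⟨hA.frontier_subset hx.1, hxB⟩ : x ∈ frontier A ∩ frontier B).2

end Frontier

theorem Convex.disjoint_interior_of_disjoint_interior {𝕜 E : Type*} [Field 𝕜] [LinearOrder 𝕜]
    [IsStrictOrderedRing 𝕜] [AddCommGroup E] [Module 𝕜 E] [TopologicalSpace E]
    [IsTopologicalAddGroup E] [TopologicalSpace 𝕜] [OrderTopology 𝕜] [ContinuousSMul 𝕜 E]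
    {A B : Set E} (hB : Convex 𝕜 B) (hBi : (interior B).Nonempty)
    (hAB : Disjoint (interior A) (interior B)) : Disjoint (interior A) B := by
  have := hAB.closure_right isOpen_interior
  rw [hB.closure_interior_eq_closure_of_nonempty_interior hBi] at this
  exact this.mono_right subset_closure

theorem inter_eq_frontier_inter_of_empty_interior (n : ℕ)
    (M M' : Set (EuclideanSpace ℝ (Fin n)))
    (hMc : IsCompact M) (hMv : Convex ℝ M) (hMi : (interior M).Nonempty)
    (hM'c : IsCompact M') (hM'v : Convex ℝ M') (hM'i : (interior M').Nonempty)
    (hdim : interior (M ∩ M') = ∅) :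
    M ∩ M' = frontier M ∩ frontier M' ∧
      frontier M ∩ interior (M ∪ M') = frontier M' ∩ interior (M ∪ M') := by
  have hdisj : Disjoint (interior M) (interior M') := by
    rw [disjoint_iff_inter_eq_empty, ← interior_inter, hdim]
  have h_inter : M ∩ M' = frontier M ∩ frontier M' :=
    hMc.isClosed.inter_eq_frontier_inter_frontier hM'c.isClosed
      (hM'v.disjoint_interior_of_disjoint_interior hM'i hdisj)
      (hMv.disjoint_interior_of_disjoint_interior hMi hdisj.symm).symm
  have h_inter' : M' ∩ M = frontier M' ∩ frontier M := by
    rw [inter_comm, h_inter, inter_comm]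
  refine ⟨h_inter, subset_antisymm ?_ ?_⟩
  · exact subset_inter (hMc.isClosed.frontier_inter_interior_union_subset hM'c.isClosed h_inter)
      inter_subset_right
  · rw [union_comm]
    exact subset_inter (hM'c.isClosed.frontier_inter_interior_union_subset hMc.isClosed h_inter')
      inter_subset_right
end

section
/- Let φ, ψ : [0,1] → ℝ₊ be strictly convex C² functions with φ(0) = ψ(0) = 0, φ(1) = ψ(1) = 1, and φ(t)/φ'(t) < ψ(t)/ψ'(t) for all t ∈ (0,1]. Then for every t ∈ (0,1] there is a unique θ(t) ∈ (0, t) satisfying θ(t) − φ(θ(t))/φ'(θ(t)) = t − ψ(t)/ψ'(t), and the resulting function θ : [0,1] → [0,1] (with θ(0) = 0) is continuous. -/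
/-!
For a strictly convex `f ≥ 0` with `f 0 = 0`, the Newton map `N s = s - f s / f' s` (the root of
the tangent line at `s`) is continuous and strictly increasing on `(0, 1]` with `0 < N s < s`.
The ratio hypothesis says `N_ψ t < N_φ t`, and `N_φ (N_ψ t) < N_ψ t`, so the intermediate value
theorem on `[N_ψ t, t]` gives `θ t`, which is unique by monotonicity of `N_φ`. Then
`θ = N_φ⁻¹ ∘ N_ψ` is continuous on `(0, 1]` because `N_φ` is strictly monotone, and at `0`
because `0 < θ t < t`.
-/

open Set Filter Topology

noncomputable def newtonMap (f f' : ℝ → ℝ) (t : ℝ) : ℝ := t - f t / f' t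

lemma continuousOn_newtonMap {f f' : ℝ → ℝ} {s : Set ℝ} (hf : ContinuousOn f s)
    (hf' : ContinuousOn f' s) (hne : ∀ t ∈ s, f' t ≠ 0) : ContinuousOn (newtonMap f f') s :=
  continuousOn_id.sub (hf.div hf' hne)

section StrictConvex

variable {f f' : ℝ → ℝ} {b t c : ℝ}

lemma StrictConvexOn.pos_of_nonneg (hconv : StrictConvexOn ℝ (Icc 0 b) f)
    (hnonneg : ∀ t ∈ Icc 0 b, 0 ≤ f t) (h0 : f 0 = 0) (ht : t ∈ Ioc 0 b) : 0 < f t := by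
  refine (hnonneg t (Ioc_subset_Icc_self ht)).lt_of_ne fun hft => ?_
  have hmid := hconv.2 (left_mem_Icc.2 (ht.1.le.trans ht.2)) (Ioc_subset_Icc_self ht) ht.1.ne
    one_half_pos one_half_pos (add_halves 1)
  have hmid_mem : (1 / 2 : ℝ) • (0 : ℝ) + (1 / 2 : ℝ) • t ∈ Icc 0 b := by
    simp only [smul_eq_mul]; constructor <;> linarith [ht.1, ht.2]
  have := hnonneg _ hmid_mem
  simp only [h0, ← hft, smul_eq_mul, mul_zero, add_zero] at hmid this
  linarith

lemma StrictConvexOn.div_lt_of_hasDerivAt (hconv : StrictConvexOn ℝ (Icc 0 b) f)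
    (hder : HasDerivAt f (f' t) t) (h0 : f 0 = 0) (ht : t ∈ Ioc 0 b) : f t / t < f' t := by
  have := hconv.slope_lt_of_hasDerivAt (left_mem_Icc.2 (ht.1.le.trans ht.2))
    (Ioc_subset_Icc_self ht) ht.1 hder
  rwa [slope_def_field, h0, sub_zero, sub_zero] at this

lemma StrictConvexOn.deriv_pos_of_nonneg (hconv : StrictConvexOn ℝ (Icc 0 b) f)
    (hder : HasDerivAt f (f' t) t) (hnonneg : ∀ t ∈ Icc 0 b, 0 ≤ f t) (h0 : f 0 = 0)
    (ht : t ∈ Ioc 0 b) : 0 < f' t :=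
  (div_pos (hconv.pos_of_nonneg hnonneg h0 ht) ht.1).trans (hconv.div_lt_of_hasDerivAt hder h0 ht)

lemma StrictConvexOn.newtonMap_pos (hconv : StrictConvexOn ℝ (Icc 0 b) f)
    (hder : HasDerivAt f (f' t) t) (hnonneg : ∀ t ∈ Icc 0 b, 0 ≤ f t) (h0 : f 0 = 0)
    (ht : t ∈ Ioc 0 b) : 0 < newtonMap f f' t := by
  have hlt := hconv.div_lt_of_hasDerivAt hder h0 ht
  rw [div_lt_iff₀ ht.1] at hlt
  rw [newtonMap, sub_pos, div_lt_iff₀ (hconv.deriv_pos_of_nonneg hder hnonneg h0 ht)]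
  linarith

lemma StrictConvexOn.newtonMap_lt_self (hconv : StrictConvexOn ℝ (Icc 0 b) f)
    (hder : HasDerivAt f (f' t) t) (hnonneg : ∀ t ∈ Icc 0 b, 0 ≤ f t) (h0 : f 0 = 0)
    (ht : t ∈ Ioc 0 b) : newtonMap f f' t < t :=
  sub_lt_self t <| div_pos (hconv.pos_of_nonneg hnonneg h0 ht)
    (hconv.deriv_pos_of_nonneg hder hnonneg h0 ht)

/-- For `s < u`, the tangent line at `u` is negative at the root `newtonMap f f' s` of the tangent
at `s`: it lies below `f` at `s` and is steeper than the tangent at `s`. -/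
lemma StrictConvexOn.strictMonoOn_newtonMap (hconv : StrictConvexOn ℝ (Icc 0 b) f)
    (hder : ∀ t ∈ Icc 0 b, HasDerivAt f (f' t) t) (hnonneg : ∀ t ∈ Icc 0 b, 0 ≤ f t)
    (h0 : f 0 = 0) : StrictMonoOn (newtonMap f f') (Ioc 0 b) := by
  intro s hs u hu hsu
  have hs' := Ioc_subset_Icc_self hs
  have hu' := Ioc_subset_Icc_self hu
  have hfs := hconv.pos_of_nonneg hnonneg h0 hs
  have hf's := hconv.deriv_pos_of_nonneg (hder s hs') hnonneg h0 hs
  have hf'u := hconv.deriv_pos_of_nonneg (hder u hu') hnonneg h0 hu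
  have hsecant := hconv.slope_lt_of_hasDerivAt hs' hu' hsu (hder u hu')
  have hderiv_lt : f' s < f' u :=
    (hconv.lt_slope_of_hasDerivAt hs' hu' hsu (hder s hs')).trans hsecant
  rw [slope_def_field, div_lt_iff₀ (sub_pos.2 hsu)] at hsecant
  have htangent : f u + f' u * (newtonMap f f' s - u) < 0 := calc
    f u + f' u * (newtonMap f f' s - u) = f u + f' u * (s - u) - f' u * (f s / f' s) := by
      rw [newtonMap]; ring
    _ < f s - f' s * (f s / f' s) := by
      have := mul_lt_mul_of_pos_right hderiv_lt (div_pos hfs hf's)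
      linarith
    _ = 0 := by rw [mul_div_cancel₀ _ hf's.ne', sub_self]
  have hroot : newtonMap f f' s - u < -f u / f' u := by
    rw [lt_div_iff₀ hf'u]; linarith
  show newtonMap f f' s < u - f u / f' u
  linarith [neg_div (f' u) (f u)]

lemma StrictConvexOn.exists_newtonMap_eq (hconv : StrictConvexOn ℝ (Icc 0 b) f) (hder : ∀ t ∈ Icc 0 b, HasDerivAt f (f' t) t)
    (hnonneg : ∀ t ∈ Icc 0 b, 0 ≤ f t) (h0 : f 0 = 0) (hf' : ContinuousOn f' (Ioc 0 b))
    (ht : t ∈ Ioc 0 b) (hc : 0 < c) (hct : c < newtonMap f f' t) :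
    ∃ s ∈ Ioo 0 t, newtonMap f f' s = c := by
  have hder' : ∀ x ∈ Ioc 0 b, HasDerivAt f (f' x) x := fun x hx => hder x (Ioc_subset_Icc_self hx)
  have hct' : c < t := hct.trans (hconv.newtonMap_lt_self (hder' t ht) hnonneg h0 ht)
  have hsub : Icc c t ⊆ Ioc 0 b := fun x hx => ⟨hc.trans_le hx.1, hx.2.trans ht.2⟩
  have hcont : ContinuousOn (newtonMap f f') (Icc c t) :=
    (continuousOn_newtonMap (fun x hx => (hder' x hx).continuousAt.continuousWithinAt) hf'
      (fun x hx => (hconv.deriv_pos_of_nonneg (hder' x hx) hnonneg h0 hx).ne')).mono hsub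
  have hc_mem := hsub (left_mem_Icc.2 hct'.le)
  have hc_lt : newtonMap f f' c < c := hconv.newtonMap_lt_self (hder' c hc_mem) hnonneg h0 hc_mem
  obtain ⟨s, hs, hs_eq⟩ := intermediate_value_Ioo hct'.le hcont ⟨hc_lt, hct⟩
  exact ⟨s, ⟨hc.trans hs.1, hs.2⟩, hs_eq⟩

end StrictConvex

lemma StrictMonoOn.continuousWithinAt_of_comp_eq {X α β : Type*} [TopologicalSpace X]
    [LinearOrder α] [TopologicalSpace α] [OrderTopology α] [DenselyOrdered α] [NoMinOrder α]
    [NoMaxOrder α] [LinearOrder β] [TopologicalSpace β] [OrderTopology β]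
    {F : α → β} {G : X → β} {θ : X → α} {I : Set α} {s : Set X} {x : X}
    (hF : StrictMonoOn F I) (hI : I ∈ 𝓝 (θ x)) (hG : ContinuousWithinAt G s x)
    (hx : F (θ x) = G x) (hθ : ∀ᶠ y in 𝓝[s] x, θ y ∈ I ∧ F (θ y) = G y) :
    ContinuousWithinAt θ s x := by
  rw [ContinuousWithinAt, tendsto_order]
  constructor
  · intro a ha
    obtain ⟨a', ha'x, ha', ha'I⟩ := (Eventually.and (Ioi_mem_nhds ha) hI).exists_lt
    have hFa' : F a' < G x := hx ▸ hF ha'I (mem_of_mem_nhds hI) ha'x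
    filter_upwards [hθ, hG (Ioi_mem_nhds hFa')] with y ⟨hyI, hFy⟩ hGy
    exact ha'.trans ((hF.lt_iff_lt ha'I hyI).1 (hFy ▸ hGy))
  · intro a ha
    obtain ⟨a', ha'x, ha', ha'I⟩ := (Eventually.and (Iio_mem_nhds ha) hI).exists_gt
    have hFa' : G x < F a' := hx ▸ hF (mem_of_mem_nhds hI) ha'I ha'x
    filter_upwards [hθ, hG (Iio_mem_nhds hFa')] with y ⟨hyI, hFy⟩ hGy
    exact ((hF.lt_iff_lt hyI ha'I).1 (hFy ▸ hGy)).trans ha'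

lemma exists_continuousOn_eq_of_strictMonoOn {F G : ℝ → ℝ} {b : ℝ}
    (hF : StrictMonoOn F (Ioc 0 b)) (hG : ContinuousOn G (Ioc 0 b))
    (h : ∀ t ∈ Ioc 0 b, ∃ s ∈ Ioo 0 t, F s = G t) :
    ∃ θ : ℝ → ℝ, θ 0 = 0 ∧ ContinuousOn θ (Icc 0 b) ∧ (∀ t ∈ Icc 0 b, θ t ∈ Icc 0 b) ∧
      ∀ t ∈ Ioc 0 b, (θ t ∈ Ioo 0 t ∧ F (θ t) = G t) ∧ ∀ s ∈ Ioo 0 t, F s = G t → s = θ t := by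
  choose! θ₀ hθ₀ using h
  set θ := Function.update θ₀ 0 0
  have hθ : ∀ t ∈ Ioc 0 b, θ t ∈ Ioo 0 t ∧ F (θ t) = G t := fun t ht => by
    rw [show θ t = θ₀ t from Function.update_of_ne ht.1.ne' _ _]; exact hθ₀ t ht
  have hθ_Icc : ∀ t ∈ Icc 0 b, θ t ∈ Icc 0 t := by
    intro t ht
    rcases ht.1.eq_or_lt with rfl | ht₀
    · simp [θ]
    · exact Ioo_subset_Icc_self (hθ t ⟨ht₀, ht.2⟩).1
  have huniq : ∀ t ∈ Ioc 0 b, ∀ s ∈ Ioo 0 t, F s = G t → s = θ t := fun t ht s hs hFs =>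
    hF.injOn ⟨hs.1, hs.2.le.trans ht.2⟩ ⟨(hθ t ht).1.1, (hθ t ht).1.2.le.trans ht.2⟩
      (hFs.trans (hθ t ht).2.symm)
  refine ⟨θ, Function.update_self .., fun t ht => ?_,
    fun t ht => Icc_subset_Icc_right ht.2 (hθ_Icc t ht), fun t ht => ⟨hθ t ht, huniq t ht⟩⟩
  rcases ht.1.eq_or_lt with rfl | ht₀
  · have hθ0 : θ 0 = 0 := Function.update_self ..
    rw [ContinuousWithinAt, hθ0]
    refine tendsto_of_tendsto_of_tendsto_of_le_of_le' tendsto_const_nhds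
      (tendsto_id.mono_left nhdsWithin_le_nhds) ?_ ?_ <;>
      filter_upwards [self_mem_nhdsWithin] with t ht
    exacts [(hθ_Icc t ht).1, (hθ_Icc t ht).2]
  · have hIoc : Ioc 0 b ∈ 𝓝[Icc 0 b] t := by
      filter_upwards [self_mem_nhdsWithin, nhdsWithin_le_nhds (Ioi_mem_nhds ht₀)] with s hs hs₀
      exact ⟨hs₀, hs.2⟩
    obtain ⟨hθt, hFt⟩ := hθ t ⟨ht₀, ht.2⟩
    refine hF.continuousWithinAt_of_comp_eq ?_ ((hG t ⟨ht₀, ht.2⟩).mono_of_mem_nhdsWithin hIoc)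
      hFt ?_
    · exact mem_of_superset (Ioo_mem_nhds hθt.1 (hθt.2.trans_le ht.2)) Ioo_subset_Ioc_self
    · filter_upwards [hIoc] with s hs
      exact ⟨⟨(hθ s hs).1.1, (hθ s hs).1.2.le.trans hs.2⟩, (hθ s hs).2⟩

theorem theta_exists_unique_continuous_general
    (φ ψ φ' ψ' : ℝ → ℝ)
    (hφconv : StrictConvexOn ℝ (Icc 0 1) φ) (hψconv : StrictConvexOn ℝ (Icc 0 1) ψ)
    (hφder : ∀ t ∈ Icc (0:ℝ) 1, HasDerivAt φ (φ' t) t)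
    (hψder : ∀ t ∈ Icc (0:ℝ) 1, HasDerivAt ψ (ψ' t) t)
    (hφ'C1 : ContDiffOn ℝ 1 φ' (Icc 0 1)) (hψ'C1 : ContDiffOn ℝ 1 ψ' (Icc 0 1))
    (hφpos : ∀ t ∈ Icc (0:ℝ) 1, 0 ≤ φ t) (hψpos : ∀ t ∈ Icc (0:ℝ) 1, 0 ≤ ψ t)
    (hφ0 : φ 0 = 0) (hψ0 : ψ 0 = 0)
    (hratio : ∀ t ∈ Ioc (0:ℝ) 1, φ t / φ' t < ψ t / ψ' t) :
    ∃ θ : ℝ → ℝ, θ 0 = 0 ∧ ContinuousOn θ (Icc 0 1) ∧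
      (∀ t ∈ Icc (0:ℝ) 1, θ t ∈ Icc 0 1) ∧
      ∀ t ∈ Ioc (0:ℝ) 1,
        (θ t ∈ Ioo 0 t ∧ θ t - φ (θ t) / φ' (θ t) = t - ψ t / ψ' t) ∧
        ∀ s ∈ Ioo (0:ℝ) t, s - φ s / φ' s = t - ψ t / ψ' t → s = θ t := by
  have hφ' : ContinuousOn φ' (Ioc 0 1) := hφ'C1.continuousOn.mono Ioc_subset_Icc_self
  have hψ_newton : ContinuousOn (newtonMap ψ ψ') (Ioc 0 1) :=
    continuousOn_newtonMap
      (fun t ht => (hψder t (Ioc_subset_Icc_self ht)).continuousAt.continuousWithinAt)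
      (hψ'C1.continuousOn.mono Ioc_subset_Icc_self)
      fun t ht => (hψconv.deriv_pos_of_nonneg (hψder t (Ioc_subset_Icc_self ht)) hψpos hψ0 ht).ne'
  refine exists_continuousOn_eq_of_strictMonoOn (hφconv.strictMonoOn_newtonMap hφder hφpos hφ0)
    hψ_newton fun t ht => hφconv.exists_newtonMap_eq hφder hφpos hφ0 hφ' ht
      (hψconv.newtonMap_pos (hψder t (Ioc_subset_Icc_self ht)) hψpos hψ0 ht) ?_
  unfold newtonMap
  linarith [hratio t ht]

theorem theta_exists_unique_continuous
    (φ ψ φ' ψ' : ℝ → ℝ)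
    (hφconv : StrictConvexOn ℝ (Icc 0 1) φ) (hψconv : StrictConvexOn ℝ (Icc 0 1) ψ)
    (hφder : ∀ t ∈ Icc (0:ℝ) 1, HasDerivAt φ (φ' t) t)
    (hψder : ∀ t ∈ Icc (0:ℝ) 1, HasDerivAt ψ (ψ' t) t)
    (hφ'C1 : ContDiffOn ℝ 1 φ' (Icc 0 1)) (hψ'C1 : ContDiffOn ℝ 1 ψ' (Icc 0 1))
    (hφpos : ∀ t ∈ Icc (0:ℝ) 1, 0 ≤ φ t) (hψpos : ∀ t ∈ Icc (0:ℝ) 1, 0 ≤ ψ t)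
    (hφ0 : φ 0 = 0) (hψ0 : ψ 0 = 0) (hφ1 : φ 1 = 1) (hψ1 : ψ 1 = 1)
    (hratio : ∀ t ∈ Ioc (0:ℝ) 1, φ t / φ' t < ψ t / ψ' t) :
    ∃ θ : ℝ → ℝ, θ 0 = 0 ∧ ContinuousOn θ (Icc 0 1) ∧
      (∀ t ∈ Icc (0:ℝ) 1, θ t ∈ Icc 0 1) ∧
      ∀ t ∈ Ioc (0:ℝ) 1,
        (θ t ∈ Ioo 0 t ∧ θ t - φ (θ t) / φ' (θ t) = t - ψ t / ψ' t) ∧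
        ∀ s ∈ Ioo (0:ℝ) t, s - φ s / φ' s = t - ψ t / ψ' t → s = θ t :=
  theta_exists_unique_continuous_general φ ψ φ' ψ' hφconv hψconv hφder hψder hφ'C1 hψ'C1 hφpos hψpos
    hφ0 hψ0 hratio
end
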